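/- arXiv:2401.03649 — 2 statements merged into one kernel-verified Lean document; each statement's English description precedes it below -/
import Mathlib

section
/- Let n ≥ 1 and let ϖ, φ be natural numbers with 0 ≤ ϖ < n and φ ≥ 1. Then the Bayes factor of the zero-inflated Poisson model against the Poisson model, defined as the ratio of the ZIP marginal likelihood integral ∫₀^{1}∫₀^{∞} (α + (1 − α)e^{−θ})^{ϖ}(1 − α)^{n−ϖ}e^{−(n−ϖ)θ}θ^{φ}·θ^{−1/2} dθ dα to the Poisson marginal likelihood integral ∫₀^{∞} e^{−nθ}θ^{φ}·θ^{−1/2} dθ, equals (ϖ!/(n+1)!) · ∑_{j=0}^{ϖ} ((n−j)!/(ϖ−j)!) · (1 − j/n)^{−(φ + 1/2)}. -/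
/-!
Expanding `(α + (1 - α) e^{-θ})^ϖ` binomially, the `k`-th term of the ZIP integrand is
`C(ϖ, k) α^k (1 - α)^(n - k) · θ^(s - 1) e^{-(n - k) θ}` with `s = φ + 1/2`, so each term
separates into a Beta integral `k! (n - k)! / (n + 1)!` and a Gamma integral `Γ(s) / (n - k)^s`.
The Poisson integral is `Γ(s) / n^s`; after cancelling `Γ(s)`, `(n / (n - k))^s = (1 - k/n)^(-s)`.
-/

open Real Finset MeasureTheory Set

section
open scoped Nat

lemma intervalIntegral_pow_mul_one_sub_pow (a b : ℕ) :
    ∫ x in (0 : ℝ)..1, x ^ a * (1 - x) ^ b = (a ! * b ! : ℝ) / (a + b + 1)! := by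
  have hB := Complex.betaIntegral_eq_Gamma_mul_div (a + 1) (b + 1)
    (by norm_cast; positivity) (by norm_cast; positivity)
  rw [show (a + 1 : ℂ) + (b + 1) = ((a + b + 1 : ℕ) : ℂ) + 1 by push_cast; ring,
    Complex.Gamma_nat_eq_factorial, Complex.Gamma_nat_eq_factorial,
    Complex.Gamma_nat_eq_factorial, Complex.betaIntegral] at hB
  apply Complex.ofReal_injective
  rw [← intervalIntegral.integral_ofReal]
  push_cast
  rw [← hB]
  refine intervalIntegral.integral_congr fun x _ => ?_
  simp [← Complex.cpow_natCast]

lemma integrableOn_rpow_mul_exp_neg_mul_Ioi {a r : ℝ} (ha : 0 < a) (hr : 0 < r) :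
    IntegrableOn (fun t : ℝ => t ^ (a - 1) * exp (-(r * t))) (Ioi 0) :=
  Integrable.of_integral_ne_zero (by rw [integral_rpow_mul_exp_neg_mul_Ioi ha hr]; positivity)

lemma add_mul_pow_mul_pow_mul_pow_eq_sum {R : Type*} [CommRing R] {m n : ℕ} (h : m ≤ n)
    (α x : R) :
    (α + (1 - α) * x) ^ m * (1 - α) ^ (n - m) * x ^ (n - m) =
      ∑ k ∈ range (m + 1), (m.choose k * (α ^ k * (1 - α) ^ (n - k))) * x ^ (n - k) := by
  rw [add_pow, sum_mul, sum_mul]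
  refine sum_congr rfl fun k _ => ?_
  rw [show n - k = (m - k) + (n - m) by grind, pow_add, pow_add, mul_pow]
  ring

lemma integral_Ioi_zip_likelihood {m n : ℕ} (h : m < n) {s : ℝ} (hs : 0 < s) (α : ℝ) :
    ∫ θ in Ioi (0 : ℝ), (α + (1 - α) * exp (-θ)) ^ m * (1 - α) ^ (n - m) *
        exp (-((n - m : ℕ) : ℝ) * θ) * θ ^ (s - 1) =
      ∑ k ∈ range (m + 1), (m.choose k * (α ^ k * (1 - α) ^ (n - k))) *
        ((1 / ((n - k : ℕ) : ℝ)) ^ s * Gamma s) := by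
  have hpos : ∀ k ∈ range (m + 1), (0 : ℝ) < (n - k : ℕ) := fun k hk => by
    exact_mod_cast Nat.sub_pos_of_lt (by grind)
  have hexp : ∀ (j : ℕ) (θ : ℝ), exp (-(j : ℝ) * θ) = exp (-θ) ^ j := fun j θ => by
    rw [← exp_nat_mul]; ring_nf
  calc _ = ∫ θ in Ioi (0 : ℝ), ∑ k ∈ range (m + 1), (m.choose k * (α ^ k * (1 - α) ^ (n - k))) *
        (θ ^ (s - 1) * exp (-(((n - k : ℕ) : ℝ) * θ))) := by
        refine integral_congr_ae (ae_of_all _ fun θ => ?_)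
        simp only [hexp, neg_mul_eq_neg_mul]
        rw [add_mul_pow_mul_pow_mul_pow_eq_sum h.le, sum_mul]
        refine sum_congr rfl fun k _ => ?_
        ring
    _ = _ := by
        rw [integral_finsetSum _ fun k hk =>
          (integrableOn_rpow_mul_exp_neg_mul_Ioi hs (hpos k hk)).const_mul _]
        refine sum_congr rfl fun k hk => ?_
        rw [integral_const_mul, integral_rpow_mul_exp_neg_mul_Ioi hs (hpos k hk)]

lemma integral_Ioo_integral_Ioi_zip_likelihood {m n : ℕ} (h : m < n) {s : ℝ} (hs : 0 < s) :
    ∫ α in Ioo (0 : ℝ) 1, ∫ θ in Ioi (0 : ℝ), (α + (1 - α) * exp (-θ)) ^ m * (1 - α) ^ (n - m) *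
        exp (-((n - m : ℕ) : ℝ) * θ) * θ ^ (s - 1) =
      Gamma s * ∑ k ∈ range (m + 1),
        m.choose k * ((k ! * (n - k)! : ℝ) / (n + 1)!) * (1 / ((n - k : ℕ) : ℝ)) ^ s := by
  simp_rw [integral_Ioi_zip_likelihood h hs]
  rw [integral_finsetSum _ fun k _ => (Continuous.integrableOn_Icc (by fun_prop)).mono_set
    Ioo_subset_Icc_self, mul_sum]
  refine sum_congr rfl fun k hk => ?_
  rw [integral_mul_const, integral_const_mul, ← integral_Ioc_eq_integral_Ioo,
    ← intervalIntegral.integral_of_le zero_le_one, intervalIntegral_pow_mul_one_sub_pow,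
    show k + (n - k) + 1 = n + 1 by grind]
  ring

lemma setIntegral_mul_pow_mul_rpow_neg_half (f : ℝ → ℝ) (p : ℕ) :
    ∫ θ in Ioi (0 : ℝ), f θ * θ ^ p * θ ^ (-(1 / 2 : ℝ)) =
      ∫ θ in Ioi (0 : ℝ), f θ * θ ^ ((p + 1 / 2 : ℝ) - 1) := by
  refine setIntegral_congr_fun measurableSet_Ioi fun θ (hθ : 0 < θ) => ?_
  rw [mul_assoc, ← rpow_natCast, ← rpow_add hθ]
  ring_nf

lemma choose_mul_beta_mul_rpow_div {m n k : ℕ} (h : m < n) (hk : k ≤ m) (s : ℝ) :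
    m.choose k * ((k ! * (n - k)! : ℝ) / (n + 1)!) * (1 / ((n - k : ℕ) : ℝ)) ^ s /
        (1 / (n : ℝ)) ^ s =
      (m ! / (n + 1)! : ℝ) * ((n - k)! / (m - k)! * (1 - (k : ℝ) / n) ^ (-s)) := by
  have hn : (0 : ℝ) < n := by exact_mod_cast (by omega : 0 < n)
  have hnk : (0 : ℝ) < (n - k : ℕ) := by exact_mod_cast (by omega : 0 < n - k)
  have hratio : 1 - (k : ℝ) / n = (n - k : ℕ) / n := by
    rw [Nat.cast_sub (by omega)]; field_simp
  rw [Nat.cast_choose ℝ hk, hratio, rpow_neg (by positivity), div_rpow hnk.le hn.le,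
    div_rpow zero_le_one hnk.le, div_rpow zero_le_one hn.le]
  field_simp

end

theorem zip_vs_poisson_bayes_factor_general (n ϖ φ : ℕ) (hϖ : ϖ < n) :
    (∫ α in Set.Ioo (0 : ℝ) 1, ∫ θ in Set.Ioi (0 : ℝ),
        (α + (1 - α) * Real.exp (-θ)) ^ ϖ * (1 - α) ^ (n - ϖ) *
          Real.exp (-((n - ϖ : ℕ) : ℝ) * θ) * θ ^ φ * θ ^ (-(1 / 2 : ℝ))) /
      (∫ θ in Set.Ioi (0 : ℝ), Real.exp (-(n : ℝ) * θ) * θ ^ φ * θ ^ (-(1 / 2 : ℝ))) =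
    ((Nat.factorial ϖ : ℝ) / (Nat.factorial (n + 1) : ℝ)) *
      ∑ j ∈ Finset.range (ϖ + 1),
        ((Nat.factorial (n - j) : ℝ) / (Nat.factorial (ϖ - j) : ℝ)) *
          (1 - (j : ℝ) / (n : ℝ)) ^ (-((φ : ℝ) + 1 / 2)) := by
  have hs : (0 : ℝ) < φ + 1 / 2 := by positivity
  have hn : (0 : ℝ) < n := by exact_mod_cast (by omega : 0 < n)
  have hPoisson : ∫ θ in Ioi (0 : ℝ), exp (-(n : ℝ) * θ) * θ ^ ((φ + 1 / 2 : ℝ) - 1) =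
      Gamma (φ + 1 / 2) * (1 / (n : ℝ)) ^ (φ + 1 / 2 : ℝ) := by
    rw [mul_comm, ← integral_rpow_mul_exp_neg_mul_Ioi hs hn]
    simp_rw [mul_comm (exp _), neg_mul]
  simp_rw [setIntegral_mul_pow_mul_rpow_neg_half]
  rw [integral_Ioo_integral_Ioi_zip_likelihood hϖ hs, hPoisson,
    mul_div_mul_left _ _ (Gamma_pos_of_pos hs).ne', sum_div, mul_sum]
  refine sum_congr rfl fun k hk => ?_
  rw [choose_mul_beta_mul_rpow_div hϖ (by grind) _, neg_add]

/-- The Bayes factor of the zero-inflated Poisson model against the Poisson model (the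
ratio of the ZIP marginal likelihood integral to the Poisson marginal likelihood
integral, both under the Jeffreys prior `θ^{−1/2}`, with a uniform prior on the
zero-inflation parameter) equals
`(ϖ!/(n+1)!) · ∑_{j=0}^{ϖ} ((n−j)!/(ϖ−j)!) · (1 − j/n)^{−(φ + 1/2)}`. -/
theorem zip_vs_poisson_bayes_factor (n ϖ φ : ℕ) (hn : 1 ≤ n) (hϖ : ϖ < n) (hφ : 1 ≤ φ) :
    (∫ α in Set.Ioo (0 : ℝ) 1, ∫ θ in Set.Ioi (0 : ℝ),
        (α + (1 - α) * Real.exp (-θ)) ^ ϖ * (1 - α) ^ (n - ϖ) *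
          Real.exp (-((n - ϖ : ℕ) : ℝ) * θ) * θ ^ φ * θ ^ (-(1 / 2 : ℝ))) /
      (∫ θ in Set.Ioi (0 : ℝ), Real.exp (-(n : ℝ) * θ) * θ ^ φ * θ ^ (-(1 / 2 : ℝ))) =
    ((Nat.factorial ϖ : ℝ) / (Nat.factorial (n + 1) : ℝ)) *
      ∑ j ∈ Finset.range (ϖ + 1),
        ((Nat.factorial (n - j) : ℝ) / (Nat.factorial (ϖ - j) : ℝ)) *
          (1 - (j : ℝ) / (n : ℝ)) ^ (-((φ : ℝ) + 1 / 2)) :=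
  zip_vs_poisson_bayes_factor_general n ϖ φ hϖ
end

section
/- Let γ > 0, n ≥ 1, and let ϖ, φ be natural numbers with 0 ≤ ϖ < n and φ ≥ 1. Then the Bayes factor of the zero-inflated negative binomial model against the negative binomial model, defined as the ratio of the ZINB marginal likelihood integral ∫₀^{1}∫₀^{∞} (α + (1 − α)(1 + κ/γ)^{−γ})^{ϖ}(1 − α)^{n−ϖ}(γ/(γ+κ))^{(n−ϖ)γ}(κ/(γ+κ))^{φ}·√(γ/(κ(γ+κ))) dκ dα to the NB marginal likelihood integral ∫₀^{∞} (γ/(γ+κ))^{nγ}(κ/(γ+κ))^{φ}·√(γ/(κ(γ+κ))) dκ, equals (ϖ!·Γ(φ + nγ + 1/2) / ((n+1)!·Γ(nγ))) · ∑_{j=0}^{ϖ} ((n−j)!·Γ((n−j)γ)) / ((ϖ−j)!·Γ(φ + (n−j)γ + 1/2)). -/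
/-!
Write the NB integrand with a free exponent `a` in place of `nγ`. The substitution
`κ = γ t / (1 - t)`, `t ∈ (0, 1)`, turns it into `√γ · t^(φ - 1/2) (1 - t)^(a - 1)`, so its
integral is `√γ · B(φ + 1/2, a)`. Since `(1 + κ/γ)^(-γ) = (γ/(γ+κ))^γ`, expanding the ZINB
integrand binomially in `α` writes it as `∑ⱼ C(ϖ, j) αʲ (1 - α)^(n-j)` times the NB integrand
with `a = (n - j)γ`; integrating in `α` contributes the Beta values `j! (n-j)! / (n+1)!`.
-/

open Real Finset MeasureTheory

section Beta

variable {a b : ℝ}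

lemma cpow_mul_one_sub_cpow_eq_ofReal {x : ℝ} (hx : x ∈ Set.Ioo (0 : ℝ) 1) :
    (x : ℂ) ^ ((a : ℂ) - 1) * (1 - (x : ℂ)) ^ ((b : ℂ) - 1) =
      ((x ^ (a - 1) * (1 - x) ^ (b - 1) : ℝ) : ℂ) := by
  have h1x : (0 : ℝ) ≤ 1 - x := by linarith [hx.2]
  push_cast [Complex.ofReal_cpow hx.1.le, Complex.ofReal_cpow h1x]
  rfl

lemma integrableOn_rpow_mul_one_sub_rpow (ha : 0 < a) (hb : 0 < b) :
    IntegrableOn (fun x : ℝ => x ^ (a - 1) * (1 - x) ^ (b - 1)) (Set.Ioo 0 1) := by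
  have h := (intervalIntegrable_iff_integrableOn_Ioo_of_le zero_le_one).mp
    (Complex.betaIntegral_convergent (u := a) (v := b) (by simpa) (by simpa))
  simpa [IntegrableOn] using (h.congr_fun (fun x hx => cpow_mul_one_sub_cpow_eq_ofReal hx)
    measurableSet_Ioo).re

theorem integral_rpow_mul_one_sub_rpow (ha : 0 < a) (hb : 0 < b) :
    ∫ x in Set.Ioo (0 : ℝ) 1, x ^ (a - 1) * (1 - x) ^ (b - 1) =
      Gamma a * Gamma b / Gamma (a + b) := by
  have hB : Complex.betaIntegral a b =
      ((∫ x in Set.Ioo (0 : ℝ) 1, x ^ (a - 1) * (1 - x) ^ (b - 1) : ℝ) : ℂ) := by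
    rw [Complex.betaIntegral, intervalIntegral.integral_of_le zero_le_one,
      integral_Ioc_eq_integral_Ioo,
      setIntegral_congr_fun measurableSet_Ioo fun x hx => cpow_mul_one_sub_cpow_eq_ofReal hx]
    exact integral_ofReal
  have h := Complex.betaIntegral_eq_Gamma_mul_div a b (by simpa) (by simpa)
  rw [hB, ← Complex.ofReal_add, Complex.Gamma_ofReal, Complex.Gamma_ofReal,
    Complex.Gamma_ofReal] at h
  exact_mod_cast h

theorem integral_pow_mul_one_sub_pow (j m : ℕ) :
    ∫ x in Set.Ioo (0 : ℝ) 1, x ^ j * (1 - x) ^ m =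
      (j.factorial * m.factorial / (j + m + 1).factorial : ℝ) := by
  have h := integral_rpow_mul_one_sub_rpow (a := j + 1) (b := m + 1)
    (by positivity) (by positivity)
  simp only [add_sub_cancel_right, rpow_natCast] at h
  rw [h, show (j + 1 : ℝ) + (m + 1) = ((j + m + 1 : ℕ) : ℝ) + 1 by push_cast; ring,
    Gamma_nat_eq_factorial, Gamma_nat_eq_factorial, Gamma_nat_eq_factorial]

end Beta

section Substitution

variable {E : Type*} [NormedAddCommGroup E] [NormedSpace ℝ E] {γ : ℝ}

lemma hasDerivWithinAt_mul_div_one_sub (γ : ℝ) {t : ℝ} (ht : t ≠ 1) (s : Set ℝ) :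
    HasDerivWithinAt (fun t : ℝ => γ * t / (1 - t)) (γ / (1 - t) ^ 2) s t := by
  have h1t : 1 - t ≠ 0 := sub_ne_zero.mpr (Ne.symm ht)
  refine (((hasDerivAt_id' t).const_mul γ).div ((hasDerivAt_id' t).const_sub 1)
    h1t).hasDerivWithinAt.congr_deriv ?_
  ring

lemma injOn_mul_div_one_sub (hγ : γ ≠ 0) :
    Set.InjOn (fun t : ℝ => γ * t / (1 - t)) (Set.Iio 1) := by
  intro s (hs : s < 1) t (ht : t < 1) h
  have h1s : 1 - s ≠ 0 := by linarith
  have h1t : 1 - t ≠ 0 := by linarith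
  field_simp at h
  linarith

lemma image_mul_div_one_sub_Ioo (hγ : 0 < γ) :
    (fun t : ℝ => γ * t / (1 - t)) '' Set.Ioo 0 1 = Set.Ioi 0 := by
  ext κ
  constructor
  · rintro ⟨t, ⟨ht0, ht1⟩, rfl⟩
    exact div_pos (mul_pos hγ ht0) (sub_pos.mpr ht1)
  · intro (hκ : 0 < κ)
    refine ⟨κ / (γ + κ), ⟨by positivity, (div_lt_one (by positivity)).mpr (by linarith)⟩, ?_⟩
    have hγκ : γ + κ ≠ 0 := by positivity
    simp only [one_sub_div hγκ, add_sub_cancel_right]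
    field_simp

theorem integrableOn_Ioi_iff_comp_mul_div_one_sub (hγ : 0 < γ) (g : ℝ → E) :
    IntegrableOn g (Set.Ioi 0) ↔
      IntegrableOn (fun t => (γ / (1 - t) ^ 2) • g (γ * t / (1 - t))) (Set.Ioo 0 1) := by
  rw [← image_mul_div_one_sub_Ioo hγ, integrableOn_image_iff_integrableOn_abs_deriv_smul
    measurableSet_Ioo (fun t ht => hasDerivWithinAt_mul_div_one_sub γ ht.2.ne _)
    ((injOn_mul_div_one_sub hγ.ne').mono Set.Ioo_subset_Iio_self)]
  refine integrableOn_congr_fun (fun t ht => ?_) measurableSet_Ioo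
  rw [abs_of_pos (div_pos hγ (pow_pos (sub_pos.mpr ht.2) 2))]

theorem integral_Ioi_eq_integral_comp_mul_div_one_sub (hγ : 0 < γ) (g : ℝ → E) :
    ∫ κ in Set.Ioi 0, g κ =
      ∫ t in Set.Ioo 0 1, (γ / (1 - t) ^ 2) • g (γ * t / (1 - t)) := by
  rw [← image_mul_div_one_sub_Ioo hγ, integral_image_eq_integral_abs_deriv_smul
    measurableSet_Ioo (fun t ht => hasDerivWithinAt_mul_div_one_sub γ ht.2.ne _)
    ((injOn_mul_div_one_sub hγ.ne').mono Set.Ioo_subset_Iio_self)]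
  refine setIntegral_congr_fun measurableSet_Ioo fun t ht => ?_
  rw [abs_of_pos (div_pos hγ (pow_pos (sub_pos.mpr ht.2) 2))]

end Substitution

section NegativeBinomial

variable {γ : ℝ}

noncomputable def nbIntegrand (γ : ℝ) (φ : ℕ) (a κ : ℝ) : ℝ :=
  (γ / (γ + κ)) ^ a * (κ / (γ + κ)) ^ φ * √(γ / (κ * (γ + κ)))

lemma div_one_sub_sq_mul_nbIntegrand (hγ : 0 < γ) (φ : ℕ) (a : ℝ) {t : ℝ}
    (ht : t ∈ Set.Ioo (0 : ℝ) 1) :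
    γ / (1 - t) ^ 2 * nbIntegrand γ φ a (γ * t / (1 - t)) =
      √γ * (t ^ ((φ + 1 / 2 : ℝ) - 1) * (1 - t) ^ (a - 1)) := by
  obtain ⟨ht0, ht1⟩ := ht
  have h1t : 0 < 1 - t := sub_pos.mpr ht1
  have hsum : γ + γ * t / (1 - t) = γ / (1 - t) := by field_simp; ring
  have hsqrt : √(γ / (γ * t / (1 - t) * (γ / (1 - t)))) = (1 - t) / (√γ * √t) := by
    rw [show γ / (γ * t / (1 - t) * (γ / (1 - t))) = (1 - t) ^ 2 / (γ * t) by field_simp,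
      sqrt_div (sq_nonneg _), sqrt_sq h1t.le, sqrt_mul hγ.le]
  have hpow_t : t ^ ((φ + 1 / 2 : ℝ) - 1) = t ^ φ / √t := by
    rw [show (φ + 1 / 2 : ℝ) - 1 = φ - 1 / 2 by ring, rpow_sub ht0, rpow_natCast, sqrt_eq_rpow]
  rw [nbIntegrand, hsum, hsqrt, hpow_t, rpow_sub_one h1t.ne',
    show γ / (γ / (1 - t)) = 1 - t by field_simp,
    show γ * t / (1 - t) / (γ / (1 - t)) = t by field_simp]
  field_simp
  rw [sq_sqrt hγ.le]

lemma integrableOn_nbIntegrand (hγ : 0 < γ) (φ : ℕ) {a : ℝ} (ha : 0 < a) :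
    IntegrableOn (nbIntegrand γ φ a) (Set.Ioi 0) := by
  rw [integrableOn_Ioi_iff_comp_mul_div_one_sub hγ]
  refine IntegrableOn.congr_fun
    ((integrableOn_rpow_mul_one_sub_rpow (a := φ + 1 / 2) (by positivity) ha).const_mul √γ)
    (fun t ht => ?_) measurableSet_Ioo
  rw [smul_eq_mul, div_one_sub_sq_mul_nbIntegrand hγ φ a ht]

theorem integral_nbIntegrand (hγ : 0 < γ) (φ : ℕ) {a : ℝ} (ha : 0 < a) :
    ∫ κ in Set.Ioi 0, nbIntegrand γ φ a κ =
      √γ * (Gamma (φ + 1 / 2) * Gamma a / Gamma (φ + a + 1 / 2)) := by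
  rw [integral_Ioi_eq_integral_comp_mul_div_one_sub hγ,
    setIntegral_congr_fun measurableSet_Ioo fun t ht => by
      rw [smul_eq_mul, div_one_sub_sq_mul_nbIntegrand hγ φ a ht],
    integral_const_mul, integral_rpow_mul_one_sub_rpow (by positivity) ha, add_right_comm]

end NegativeBinomial

section ZeroInflated

variable {γ : ℝ} {n ϖ : ℕ}

noncomputable def zinbIntegrand (γ : ℝ) (n ϖ φ : ℕ) (α κ : ℝ) : ℝ :=
  (α + (1 - α) * (1 + κ / γ) ^ (-γ)) ^ ϖ * (1 - α) ^ (n - ϖ) *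
    (γ / (γ + κ)) ^ (((n - ϖ : ℕ) : ℝ) * γ) * (κ / (γ + κ)) ^ φ * √(γ / (κ * (γ + κ)))

lemma zinbIntegrand_eq_sum (hγ : 0 < γ) (hϖ : ϖ ≤ n) (φ : ℕ) (α : ℝ) {κ : ℝ}
    (hκ : 0 < κ) :
    zinbIntegrand γ n ϖ φ α κ = ∑ j ∈ range (ϖ + 1),
      ϖ.choose j * α ^ j * (1 - α) ^ (n - j) * nbIntegrand γ φ (((n - j : ℕ) : ℝ) * γ) κ := by
  have hq : 0 < γ / (γ + κ) := by positivity
  have hzero : (1 + κ / γ) ^ (-γ) = (γ / (γ + κ)) ^ γ := by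
    rw [show 1 + κ / γ = (γ / (γ + κ))⁻¹ by field_simp, inv_rpow hq.le, rpow_neg hq.le,
      inv_inv]
  rw [zinbIntegrand, hzero, add_pow, sum_mul, sum_mul, sum_mul, sum_mul]
  refine sum_congr rfl fun j hj => ?_
  have hjϖ : j ≤ ϖ := Nat.lt_succ_iff.mp (mem_range.mp hj)
  have h_one_sub : (1 - α) ^ (n - j) = (1 - α) ^ (ϖ - j) * (1 - α) ^ (n - ϖ) := by
    rw [← pow_add]; congr 1; omega
  have h_q : (γ / (γ + κ)) ^ (((n - j : ℕ) : ℝ) * γ) =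
      ((γ / (γ + κ)) ^ γ) ^ (ϖ - j) * (γ / (γ + κ)) ^ (((n - ϖ : ℕ) : ℝ) * γ) := by
    rw [← rpow_natCast, ← rpow_mul hq.le, ← rpow_add hq, Nat.cast_sub (hjϖ.trans hϖ),
      Nat.cast_sub hjϖ, Nat.cast_sub hϖ]
    ring_nf
  rw [nbIntegrand, mul_pow, h_one_sub, h_q]
  ring

lemma integral_zinbIntegrand_Ioi (hγ : 0 < γ) (hϖ : ϖ < n) (φ : ℕ) (α : ℝ) :
    ∫ κ in Set.Ioi 0, zinbIntegrand γ n ϖ φ α κ = ∑ j ∈ range (ϖ + 1),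
      ϖ.choose j * α ^ j * (1 - α) ^ (n - j) * (√γ * (Gamma (φ + 1 / 2) *
        Gamma (((n - j : ℕ) : ℝ) * γ) / Gamma (φ + ((n - j : ℕ) : ℝ) * γ + 1 / 2))) := by
  have hpos : ∀ j ∈ range (ϖ + 1), 0 < ((n - j : ℕ) : ℝ) * γ := fun j hj => by
    have : j < n := (Nat.lt_succ_iff.mp (mem_range.mp hj)).trans_lt hϖ
    have : 0 < n - j := by omega
    positivity
  rw [setIntegral_congr_fun measurableSet_Ioi fun κ hκ =>
      zinbIntegrand_eq_sum hγ hϖ.le φ α (Set.mem_Ioi.mp hκ),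
    integral_finsetSum _ fun j hj => (integrableOn_nbIntegrand hγ φ (hpos j hj)).const_mul _]
  refine sum_congr rfl fun j hj => ?_
  rw [integral_const_mul, integral_nbIntegrand hγ φ (hpos j hj)]

theorem integral_integral_zinbIntegrand (hγ : 0 < γ) (hϖ : ϖ < n) (φ : ℕ) :
    ∫ α in Set.Ioo 0 1, ∫ κ in Set.Ioi 0, zinbIntegrand γ n ϖ φ α κ =
      ∑ j ∈ range (ϖ + 1), ϖ.choose j * (j.factorial * (n - j).factorial / (n + 1).factorial : ℝ) *
        (√γ * (Gamma (φ + 1 / 2) * Gamma (((n - j : ℕ) : ℝ) * γ) /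
          Gamma (φ + ((n - j : ℕ) : ℝ) * γ + 1 / 2))) := by
  simp_rw [integral_zinbIntegrand_Ioi hγ hϖ φ]
  rw [integral_finsetSum _ fun j _ => (by fun_prop : Continuous fun α : ℝ =>
    _).integrableOn_Icc.mono_set Set.Ioo_subset_Icc_self]
  refine sum_congr rfl fun j hj => ?_
  have hjn : j + (n - j) + 1 = n + 1 := by
    have := mem_range.mp hj
    omega
  simp_rw [integral_mul_const, mul_assoc (ϖ.choose j : ℝ), integral_const_mul,
    integral_pow_mul_one_sub_pow, hjn, mul_assoc]

end ZeroInflated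

theorem zinb_vs_nb_bayes_factor_general (γ : ℝ) (hγ : 0 < γ) (n ϖ φ : ℕ)
    (hϖ : ϖ < n) :
    (∫ α in Set.Ioo (0 : ℝ) 1, ∫ κ in Set.Ioi (0 : ℝ),
        (α + (1 - α) * (1 + κ / γ) ^ (-γ)) ^ ϖ * (1 - α) ^ (n - ϖ) *
          (γ / (γ + κ)) ^ (((n - ϖ : ℕ) : ℝ) * γ) * (κ / (γ + κ)) ^ φ *
          Real.sqrt (γ / (κ * (γ + κ)))) /
      (∫ κ in Set.Ioi (0 : ℝ),
        (γ / (γ + κ)) ^ ((n : ℝ) * γ) * (κ / (γ + κ)) ^ φ *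
          Real.sqrt (γ / (κ * (γ + κ)))) =
    ((Nat.factorial ϖ : ℝ) * Real.Gamma ((φ : ℝ) + (n : ℝ) * γ + 1 / 2) /
        ((Nat.factorial (n + 1) : ℝ) * Real.Gamma ((n : ℝ) * γ))) *
      ∑ j ∈ Finset.range (ϖ + 1),
        ((Nat.factorial (n - j) : ℝ) * Real.Gamma (((n - j : ℕ) : ℝ) * γ)) /
          ((Nat.factorial (ϖ - j) : ℝ) *
            Real.Gamma ((φ : ℝ) + ((n - j : ℕ) : ℝ) * γ + 1 / 2)) := by
  show (∫ α in Set.Ioo 0 1, ∫ κ in Set.Ioi 0, zinbIntegrand γ n ϖ φ α κ) /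
      (∫ κ in Set.Ioi 0, nbIntegrand γ φ (n * γ) κ) = _
  have hnγ : (0 : ℝ) < n * γ := mul_pos (Nat.cast_pos.mpr (by omega)) hγ
  rw [integral_integral_zinbIntegrand hγ hϖ, integral_nbIntegrand hγ φ hnγ, sum_div, mul_sum]
  refine sum_congr rfl fun j hj => ?_
  have hchoose : (ϖ.choose j * j.factorial * (ϖ - j).factorial : ℝ) = ϖ.factorial := by
    exact_mod_cast Nat.choose_mul_factorial_mul_factorial (Nat.lt_succ_iff.mp (mem_range.mp hj))
  rw [← hchoose]
  field_simp

/-- The Bayes factor of the zero-inflated negative binomial model against the negative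
binomial model (the ratio of the ZINB marginal likelihood integral to the NB marginal
likelihood integral, both under the Jeffreys-type prior `√(γ/(κ(γ+κ)))`, with a uniform
prior on the zero-inflation parameter) equals
`(ϖ!·Γ(φ + nγ + 1/2)/((n+1)!·Γ(nγ))) · ∑_{j=0}^{ϖ} ((n−j)!·Γ((n−j)γ))/((ϖ−j)!·Γ(φ + (n−j)γ + 1/2))`. -/
theorem zinb_vs_nb_bayes_factor (γ : ℝ) (hγ : 0 < γ) (n ϖ φ : ℕ) (hn : 1 ≤ n)
    (hϖ : ϖ < n) (hφ : 1 ≤ φ) :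
    (∫ α in Set.Ioo (0 : ℝ) 1, ∫ κ in Set.Ioi (0 : ℝ),
        (α + (1 - α) * (1 + κ / γ) ^ (-γ)) ^ ϖ * (1 - α) ^ (n - ϖ) *
          (γ / (γ + κ)) ^ (((n - ϖ : ℕ) : ℝ) * γ) * (κ / (γ + κ)) ^ φ *
          Real.sqrt (γ / (κ * (γ + κ)))) /
      (∫ κ in Set.Ioi (0 : ℝ),
        (γ / (γ + κ)) ^ ((n : ℝ) * γ) * (κ / (γ + κ)) ^ φ *
          Real.sqrt (γ / (κ * (γ + κ)))) =
    ((Nat.factorial ϖ : ℝ) * Real.Gamma ((φ : ℝ) + (n : ℝ) * γ + 1 / 2) /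
        ((Nat.factorial (n + 1) : ℝ) * Real.Gamma ((n : ℝ) * γ))) *
      ∑ j ∈ Finset.range (ϖ + 1),
        ((Nat.factorial (n - j) : ℝ) * Real.Gamma (((n - j : ℕ) : ℝ) * γ)) /
          ((Nat.factorial (ϖ - j) : ℝ) *
            Real.Gamma ((φ : ℝ) + ((n - j : ℕ) : ℝ) * γ + 1 / 2)) :=
  zinb_vs_nb_bayes_factor_general γ hγ n ϖ φ hϖ
end
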